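/- Let d ≥ 2, α < d−1, and set ε = d−1−α > 0. Let h̄ : (−1,1) → [0,∞) be measurable with h̄(z) ≤ C (1−z²)^{−α/2} for all z ∈ (−1,1). For k ≥ 1 define a_k = ω_{d−2} ∫_{−1}^{1} ((1+z)/2)^k h̄(z) (1−z²)^{(d−3)/2} dz, where ω_{d−2} is the surface measure of the (d−2)-dimensional unit sphere. Then a_k ≤ C ω_{d−2} 2^{ε−1} B(k+ε/2, ε/2) for every k ≥ 1, where B is the Beta function; consequently there exists a constant C'' (depending on C, d, α) such that a_k ≤ C'' k^{−ε/2} for all k ≥ 1. -/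

import Mathlib

/-! With `s = ε/2`, the weight satisfies `h̄(z) (1 - z²)^((d-3)/2) ≤ C (1 - z²)^(s-1)`, and the
substitution `z = 2t - 1` turns the resulting majorant into `2^(2s-1) B(k+s, s)`. For the decay,
`B(k+s, s) = ∫₀¹ t^(s-1) (1-t)^(k+s-1) dt ≤ ∫₀^∞ t^(s-1) e^(-(k+s-1)t) dt = Γ(s) (k+s-1)^(-s)`
since `1 - t ≤ e^(-t)`, and `k + s - 1 ≥ min 1 s · k` for `k ≥ 1`. -/

open MeasureTheory Real Filter Set
open scoped Topology

noncomputable section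

/-- Velocity space ℝ^d with Euclidean structure. -/
abbrev Vel (d : ℕ) := EuclideanSpace ℝ (Fin d)

/-- The unit sphere S^{d-1} ⊆ ℝ^d. -/
def unitSphere (d : ℕ) : Set (Vel d) := {σ : Vel d | ‖σ‖ = 1}

/-- ω_{d−2}: the surface measure of the (d−2)-dimensional unit sphere,
i.e. the (d−2)-dimensional Hausdorff measure of S^{d−2} ⊆ ℝ^{d−1}. -/
def omegaSphere (d : ℕ) : ℝ := (μH[(d:ℝ)-2] (unitSphere (d-1))).toReal

open ProbabilityTheory

lemma lintegral_ofReal_beta_integrand {a b : ℝ} (ha : 0 < a) (hb : 0 < b) :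
    ∫⁻ t in Ioo (0:ℝ) 1, ENNReal.ofReal (t ^ (a - 1) * (1 - t) ^ (b - 1))
      = ENNReal.ofReal (beta a b) := by
  have h := lintegral_betaPDF_eq_one ha hb
  rw [lintegral_betaPDF] at h
  simp_rw [mul_assoc, ENNReal.ofReal_mul (one_div_pos.2 (beta_pos ha hb)).le] at h
  rw [lintegral_const_mul _ (by fun_prop), one_div, ENNReal.ofReal_inv_of_pos (beta_pos ha hb),
    mul_comm] at h
  simpa using ENNReal.eq_inv_of_mul_eq_one_left h

lemma beta_integrand_nonneg {a b : ℝ} :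
    0 ≤ᵐ[volume.restrict (Ioo (0:ℝ) 1)] fun t : ℝ => t ^ (a - 1) * (1 - t) ^ (b - 1) :=
  ae_restrict_of_forall_mem measurableSet_Ioo fun _ ht =>
    mul_nonneg (rpow_nonneg ht.1.le _) (rpow_nonneg (sub_nonneg.2 ht.2.le) _)

lemma integrableOn_beta_integrand {a b : ℝ} (ha : 0 < a) (hb : 0 < b) :
    IntegrableOn (fun t : ℝ => t ^ (a - 1) * (1 - t) ^ (b - 1)) (Ioo 0 1) := by
  refine ⟨(by fun_prop : Measurable _).aestronglyMeasurable, ?_⟩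
  rw [hasFiniteIntegral_iff_ofReal beta_integrand_nonneg, lintegral_ofReal_beta_integrand ha hb]
  exact ENNReal.ofReal_lt_top

lemma integral_beta_integrand {a b : ℝ} (ha : 0 < a) (hb : 0 < b) :
    ∫ t in Ioo (0:ℝ) 1, t ^ (a - 1) * (1 - t) ^ (b - 1) = beta a b := by
  rw [integral_eq_lintegral_of_nonneg_ae beta_integrand_nonneg
      (by fun_prop : Measurable _).aestronglyMeasurable,
    lintegral_ofReal_beta_integrand ha hb, ENNReal.toReal_ofReal (beta_pos ha hb).le]

lemma beta_comm (a b : ℝ) : beta a b = beta b a := by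
  rw [beta, beta, mul_comm, add_comm]

lemma one_sub_rpow_le_exp_neg_mul {t r : ℝ} (ht : t ≤ 1) (hr : 0 ≤ r) :
    (1 - t) ^ r ≤ exp (-(r * t)) := by
  calc (1 - t) ^ r ≤ exp (-t) ^ r := rpow_le_rpow (by linarith) (one_sub_le_exp_neg t) hr
    _ = exp (-(r * t)) := by rw [← exp_mul]; ring_nf

lemma integrableOn_rpow_mul_exp_neg_mul {b r : ℝ} (hb : 0 < b) (hr : 0 < r) :
    IntegrableOn (fun t : ℝ => t ^ (b - 1) * exp (-(r * t))) (Ioi 0) := by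
  have := integrableOn_rpow_mul_exp_neg_mul_rpow (p := 1) (by linarith : -1 < b - 1) one_pos hr
  simpa [neg_mul] using this

lemma beta_le_Gamma_mul_rpow_neg {a b : ℝ} (ha : 1 < a) (hb : 0 < b) :
    beta a b ≤ Gamma b * (a - 1) ^ (-b) := by
  have hr : 0 < a - 1 := sub_pos.2 ha
  have hexp := integrableOn_rpow_mul_exp_neg_mul hb hr
  calc beta a b = ∫ t in Ioo (0:ℝ) 1, t ^ (b - 1) * (1 - t) ^ (a - 1) := by
        rw [beta_comm, integral_beta_integrand hb (by linarith)]
    _ ≤ ∫ t in Ioo (0:ℝ) 1, t ^ (b - 1) * exp (-((a - 1) * t)) :=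
        setIntegral_mono_on (integrableOn_beta_integrand hb (by linarith))
          (hexp.mono_set Ioo_subset_Ioi_self) measurableSet_Ioo fun t ht =>
            mul_le_mul_of_nonneg_left (one_sub_rpow_le_exp_neg_mul ht.2.le hr.le)
              (rpow_nonneg ht.1.le _)
    _ ≤ ∫ t in Ioi (0:ℝ), t ^ (b - 1) * exp (-((a - 1) * t)) :=
        setIntegral_mono_set hexp
          (ae_restrict_of_forall_mem measurableSet_Ioi fun t (ht : 0 < t) => by positivity)
          Ioo_subset_Ioi_self.eventuallyLE
    _ = Gamma b * (a - 1) ^ (-b) := by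
        rw [integral_rpow_mul_exp_neg_mul_Ioi hb hr, one_div, inv_rpow hr.le, rpow_neg hr.le,
          mul_comm]

lemma beta_add_le_rpow_neg {k s : ℝ} (hk : 1 ≤ k) (hs : 0 < s) :
    beta (k + s) s ≤ Gamma s * min 1 s ^ (-s) * k ^ (-s) := by
  have hmin : min 1 s * k ≤ k + s - 1 := by
    rcases le_total s 1 with h | h
    · rw [min_eq_right h]; nlinarith
    · rw [min_eq_left h]; linarith
  calc beta (k + s) s ≤ Gamma s * (k + s - 1) ^ (-s) := beta_le_Gamma_mul_rpow_neg (by linarith) hs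
    _ ≤ Gamma s * (min 1 s * k) ^ (-s) :=
        mul_le_mul_of_nonneg_left (rpow_le_rpow_of_nonpos
          (mul_pos (lt_min one_pos hs) (by linarith)) hmin (neg_nonpos.2 hs.le))
          (Gamma_pos_of_pos hs).le
    _ = Gamma s * min 1 s ^ (-s) * k ^ (-s) := by
        rw [mul_rpow (le_min zero_le_one hs.le) (by linarith), mul_assoc]

lemma integrableOn_Ioo_comp_one_add_div_two {E : Type*} [NormedAddCommGroup E] {f : ℝ → E}
    (hf : IntegrableOn f (Ioo 0 1)) :
    IntegrableOn (fun z => f ((1 + z) / 2)) (Ioo (-1) 1) := by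
  have h := (((intervalIntegrable_iff_integrableOn_Ioo_of_le zero_le_one).2 hf).comp_add_right
    2⁻¹).comp_mul_left (c := 2⁻¹)
  norm_num at h
  rw [← intervalIntegrable_iff_integrableOn_Ioo_of_le (by norm_num)]
  convert h using 2 with z
  ring_nf

lemma integral_Ioo_comp_one_add_div_two {E : Type*} [NormedAddCommGroup E] [NormedSpace ℝ E]
    (f : ℝ → E) :
    ∫ z in Ioo (-1:ℝ) 1, f ((1 + z) / 2) = (2:ℝ) • ∫ t in Ioo (0:ℝ) 1, f t := by
  have h := intervalIntegral.integral_comp_add_div (a := -1) (b := 1) f two_ne_zero 2⁻¹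
  rw [show (2⁻¹ : ℝ) + -1 / 2 = 0 by norm_num, show (2⁻¹ : ℝ) + 1 / 2 = 1 by norm_num] at h
  rw [← integral_Ioc_eq_integral_Ioo, ← integral_Ioc_eq_integral_Ioo,
    ← intervalIntegral.integral_of_le (by norm_num), ← intervalIntegral.integral_of_le zero_le_one,
    ← h]
  congr 1 with z
  ring_nf

lemma one_add_div_two_rpow_mul_one_sub_sq_rpow {z : ℝ} (hz : z ∈ Ioo (-1:ℝ) 1) (k s : ℝ) :
    ((1 + z) / 2) ^ k * (1 - z ^ 2) ^ (s - 1)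
      = 4 ^ (s - 1) * (((1 + z) / 2) ^ (k + s - 1) * (1 - (1 + z) / 2) ^ (s - 1)) := by
  have ht : 0 < (1 + z) / 2 := by linarith [hz.1]
  have ht' : 0 < 1 - (1 + z) / 2 := by linarith [hz.2]
  rw [show 1 - z ^ 2 = 4 * ((1 + z) / 2 * (1 - (1 + z) / 2)) by ring,
    mul_rpow zero_le_four (mul_pos ht ht').le, mul_rpow ht.le ht'.le, add_sub_assoc,
    rpow_add ht]
  ring

lemma mul_rpow_le_mul_rpow_add {x y C a b : ℝ} (hx : 0 < x) (hy : y ≤ C * x ^ a) :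
    y * x ^ b ≤ C * x ^ (a + b) := by
  rw [rpow_add hx, ← mul_assoc]
  exact mul_le_mul_of_nonneg_right hy (rpow_nonneg hx.le _)

lemma four_rpow_sub_one_mul_two (s : ℝ) : (4:ℝ) ^ (s - 1) * 2 = 2 ^ (2 * s - 1) := by
  rw [show 2 * s - 1 = 2 * (s - 1) + 1 by ring, rpow_add two_pos, rpow_one, rpow_mul zero_le_two]
  norm_num

lemma integral_Ioo_one_add_div_two_rpow_mul_le {k s C : ℝ} (hks : 0 < k + s) (hs : 0 < s)
    {f : ℝ → ℝ} (hf_nonneg : ∀ z ∈ Ioo (-1:ℝ) 1, 0 ≤ f z)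
    (hf_le : ∀ z ∈ Ioo (-1:ℝ) 1, f z ≤ C * (1 - z ^ 2) ^ (s - 1)) :
    ∫ z in Ioo (-1:ℝ) 1, ((1 + z) / 2) ^ k * f z ≤ C * 2 ^ (2 * s - 1) * beta (k + s) s := by
  have hg := integrableOn_beta_integrand hks hs
  calc ∫ z in Ioo (-1:ℝ) 1, ((1 + z) / 2) ^ k * f z
      ≤ ∫ z in Ioo (-1:ℝ) 1, C * 4 ^ (s - 1) *
          (((1 + z) / 2) ^ (k + s - 1) * (1 - (1 + z) / 2) ^ (s - 1)) := by
        refine integral_mono_of_nonneg ?_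
          ((integrableOn_Ioo_comp_one_add_div_two hg).const_mul _) ?_
        · exact ae_restrict_of_forall_mem measurableSet_Ioo fun z hz =>
            mul_nonneg (rpow_nonneg (by linarith [hz.1]) _) (hf_nonneg z hz)
        · refine ae_restrict_of_forall_mem measurableSet_Ioo fun z hz => ?_
          calc ((1 + z) / 2) ^ k * f z ≤ ((1 + z) / 2) ^ k * (C * (1 - z ^ 2) ^ (s - 1)) :=
                mul_le_mul_of_nonneg_left (hf_le z hz) (rpow_nonneg (by linarith [hz.1]) _)
            _ = _ := by
                rw [mul_left_comm, one_add_div_two_rpow_mul_one_sub_sq_rpow hz, ← mul_assoc]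
    _ = C * 2 ^ (2 * s - 1) * beta (k + s) s := by
        rw [integral_const_mul, integral_Ioo_comp_one_add_div_two
            (fun t => t ^ (k + s - 1) * (1 - t) ^ (s - 1)),
          integral_beta_integrand hks hs, smul_eq_mul, ← four_rpow_sub_one_mul_two]
        ring

theorem angular_moment_decay_general
    (d : ℕ) (α C : ℝ) (hα : α < (d:ℝ) - 1) (hC : 0 ≤ C)
    (hbar : ℝ → ℝ)
    (hnn : ∀ z ∈ Ioo (-1:ℝ) 1, 0 ≤ hbar z)
    (hbd : ∀ z ∈ Ioo (-1:ℝ) 1, hbar z ≤ C * (1 - z ^ 2) ^ (-(α / 2))) :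
    (∀ k : ℝ, 1 ≤ k →
      omegaSphere d *
          ∫ z in Ioo (-1:ℝ) 1, ((1 + z) / 2) ^ k * hbar z * (1 - z ^ 2) ^ (((d:ℝ) - 3) / 2)
        ≤ C * omegaSphere d * 2 ^ (((d:ℝ) - 1 - α) - 1) *
            (Real.Gamma (k + ((d:ℝ) - 1 - α) / 2) * Real.Gamma (((d:ℝ) - 1 - α) / 2) /
              Real.Gamma (k + ((d:ℝ) - 1 - α)))) ∧
    ∃ C'' : ℝ, ∀ k : ℝ, 1 ≤ k →
      omegaSphere d *
          ∫ z in Ioo (-1:ℝ) 1, ((1 + z) / 2) ^ k * hbar z * (1 - z ^ 2) ^ (((d:ℝ) - 3) / 2)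
        ≤ C'' * k ^ (-(((d:ℝ) - 1 - α) / 2)) := by
  set s : ℝ := ((d:ℝ) - 1 - α) / 2 with hs_def
  have hs : 0 < s := by linarith
  have hmoment : ∀ k : ℝ, 1 ≤ k →
      omegaSphere d *
          ∫ z in Ioo (-1:ℝ) 1, ((1 + z) / 2) ^ k * hbar z * (1 - z ^ 2) ^ (((d:ℝ) - 3) / 2)
        ≤ omegaSphere d * (C * 2 ^ (2 * s - 1) * beta (k + s) s) := by
    intro k hk
    have hpos : ∀ z ∈ Ioo (-1:ℝ) 1, 0 < 1 - z ^ 2 := fun z hz => by nlinarith [hz.1, hz.2]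
    have hexp : -(α / 2) + ((d:ℝ) - 3) / 2 = s - 1 := by linarith
    simp_rw [mul_assoc ((_ : ℝ) ^ k)]
    refine mul_le_mul_of_nonneg_left ?_ ENNReal.toReal_nonneg
    exact integral_Ioo_one_add_div_two_rpow_mul_le (by linarith) hs
      (fun z hz => mul_nonneg (hnn z hz) (rpow_nonneg (hpos z hz).le _))
      (fun z hz => hexp ▸ mul_rpow_le_mul_rpow_add (hpos z hz) (hbd z hz))
  refine ⟨fun k hk => ?_, C * omegaSphere d * 2 ^ (2 * s - 1) * (Gamma s * min 1 s ^ (-s)),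
    fun k hk => ?_⟩
  · rw [show (d:ℝ) - 1 - α = 2 * s by linarith, show k + 2 * s = k + s + s by ring]
    exact (hmoment k hk).trans_eq (by rw [beta]; ring)
  · calc _ ≤ _ := hmoment k hk
      _ ≤ omegaSphere d * (C * 2 ^ (2 * s - 1) * (Gamma s * min 1 s ^ (-s) * k ^ (-s))) :=
          mul_le_mul_of_nonneg_left (mul_le_mul_of_nonneg_left (beta_add_le_rpow_neg hk hs)
            (mul_nonneg hC (by positivity))) ENNReal.toReal_nonneg
      _ = _ := by ring

/-- **Decay of the constants a_k** (2.17). With ε = d−1−α > 0 and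
h̄(z) ≤ C (1−z²)^{−α/2}, the angular moments
a_k = ω_{d−2} ∫_{−1}^{1} ((1+z)/2)^k h̄(z) (1−z²)^{(d−3)/2} dz satisfy
a_k ≤ C ω_{d−2} 2^{ε−1} B(k+ε/2, ε/2) and hence a_k ≤ C'' k^{−ε/2}, where
B(x,y) = Γ(x)Γ(y)/Γ(x+y) is the Beta function. -/
theorem angular_moment_decay
    (d : ℕ) (hd : 2 ≤ d) (α C : ℝ) (hα : α < (d:ℝ) - 1) (hC : 0 ≤ C)
    (hbar : ℝ → ℝ) (hmeas : Measurable hbar)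
    (hnn : ∀ z ∈ Ioo (-1:ℝ) 1, 0 ≤ hbar z)
    (hbd : ∀ z ∈ Ioo (-1:ℝ) 1, hbar z ≤ C * (1 - z ^ 2) ^ (-(α / 2))) :
    (∀ k : ℝ, 1 ≤ k →
      omegaSphere d *
          ∫ z in Ioo (-1:ℝ) 1, ((1 + z) / 2) ^ k * hbar z * (1 - z ^ 2) ^ (((d:ℝ) - 3) / 2)
        ≤ C * omegaSphere d * 2 ^ (((d:ℝ) - 1 - α) - 1) *
            (Real.Gamma (k + ((d:ℝ) - 1 - α) / 2) * Real.Gamma (((d:ℝ) - 1 - α) / 2) /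
              Real.Gamma (k + ((d:ℝ) - 1 - α)))) ∧
    ∃ C'' : ℝ, ∀ k : ℝ, 1 ≤ k →
      omegaSphere d *
          ∫ z in Ioo (-1:ℝ) 1, ((1 + z) / 2) ^ k * hbar z * (1 - z ^ 2) ^ (((d:ℝ) - 3) / 2)
        ≤ C'' * k ^ (-(((d:ℝ) - 1 - α) / 2)) :=
  angular_moment_decay_general d α C hα hC hbar hnn hbd

end
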